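/- Fix M > 0. For q ∈ (0,1) and n ∈ ℕ define U_n(q) := Σ_{(r_1,...,r_n)∈ℕ^n} Π_{i=1}^n q(1−q)^{r_i−1} F_M(r_{i−1}, r_i, u_{i−1}) (with r_0 = 0, u_0 = 0, u_i = F_M(r_{i−1}, r_i, u_{i−1})). Then there exists a continuous function μ : (0,1) → ℝ such that for every q ∈ (0,1): q·log(1/q)/(2e^M(1−q)) ≤ μ(q) ≤ q·log(1/q)/(2(e^M−1)(1−q)), and for every n ∈ ℕ: (1 − e^{−M})·μ(q)^n ≤ U_n(q) ≤ μ(q)^n. -/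

import Mathlib

open MeasureTheory ProbabilityTheory Filter Set

noncomputable section

/-- The function `F_M : (ℕ ∪ {0}) × ℕ × [0,1] → [0,1]` of the paper. -/
def FM (M : ℝ) (ℓ r : ℕ) (u : ℝ) : ℝ :=
  if ℓ = 0 then Real.exp (-M) / (2 * (r : ℝ))
  else Real.exp (-M) / (2 * (r : ℝ)) *
    (1 - Real.exp (-M) * (1 - 1 / (2 * (r : ℝ)) - (1 - u) / (2 * (ℓ : ℝ))))⁻¹

/-- The recursion `u₀ = 0`, `u_i = F_M(r_{i-1}, r_i, u_{i-1})` (one takes `r 0 = 0`). -/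
def uSeq (M : ℝ) (r : ℕ → ℕ) : ℕ → ℝ
  | 0 => 0
  | (i + 1) => FM M (r i) (r (i + 1)) (uSeq M r i)

/-- Extend a tuple `(r_1, …, r_n)` of positive integers to a function `ℕ → ℕ`
with value `r_i` at `i ∈ {1, …, n}` and `0` elsewhere (in particular `r 0 = 0`). -/
def ext (n : ℕ) (r : Fin n → ℕ+) (i : ℕ) : ℕ :=
  if h : 1 ≤ i ∧ i ≤ n then (r ⟨i - 1, by omega⟩ : ℕ) else 0

/-- `U_n(q) = Σ_{(r_1,…,r_n)∈ℕ^n} Π_{i=1}^n q(1−q)^{r_i−1} F_M(r_{i−1}, r_i, u_{i−1})`: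
the probability that the killed walk reaches the `n`-th occupied site before the
first return to `0`, when the gaps are i.i.d. geometric(`q`). -/
def U (M q : ℝ) (n : ℕ) : ℝ :=
  ∑' r : Fin n → ℕ+, ∏ i ∈ Finset.Icc 1 n,
    q * (1 - q) ^ (ext n r i - 1) *
      FM M (ext n r (i - 1)) (ext n r i) (uSeq M (ext n r) (i - 1))

/-!
Write `a_k = e^{-M}/(2k)` and `c = 1 - e^{-M}`. Along a configuration `r` the recursion for `u_i`
linearises: `u_i = a_{r_i} D_{i-1} / D_i`, where `D = D(r)` solves the three-term recurrence
`D_{i+1} = (c + a_{r_{i+1}} + a_{r_i}) D_i - a_{r_i}^2 D_{i-1}`, `D_0 = D_1 = 1`; hence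
`∏ u_i = ∏ a_{r_i} / D_n`. Comparing solutions of this recurrence gives
`c D_n(x) D_m(y) ≤ D_{n+m}(xy) ≤ D_n(x) D_m(y)` for a concatenated configuration `xy`, and summing
over configurations, `U_n U_m ≤ U_{n+m} ≤ U_n U_m / c`. So `log U_n` is superadditive and
`log (U_n / c)` subadditive, and Fekete's argument produces `μ` with `U_n ≤ μ^n ≤ U_n / c`; the case
`n = 1` with the series `U_1 = e^{-M} q log(1/q) / (2(1-q))` gives the bounds on `μ`. Finally
`log (U_n / c) / n → log μ` uniformly in `q`, with error at most `-log c / n`, which gives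
continuity.
-/

open Finset Topology

theorem Subadditive.apply_mul_le {u : ℕ → ℝ} (h : Subadditive u) {k : ℕ} (hk : k ≠ 0) (n : ℕ) :
    u (k * n) ≤ k * u n := by
  obtain ⟨j, rfl⟩ := Nat.exists_eq_succ_of_ne_zero hk
  simpa [Nat.succ_mul, add_one_mul] using h.apply_mul_add_le j n n

section InfRate

variable {a b : ℕ → ℝ}

def infRate (b : ℕ → ℝ) : ℝ := ⨅ k : ℕ, b (k + 1) / (k + 1)

theorem div_le_div_of_superadditive_of_subadditive (ha : ∀ m n, a m + a n ≤ a (m + n))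
    (hb : Subadditive b) (hab : a ≤ b) {m n : ℕ} (hm : m ≠ 0) (hn : n ≠ 0) :
    a m / m ≤ b n / n := by
  have ha' : Subadditive (-a) := fun m n => by simp only [Pi.neg_apply]; linarith [ha m n]
  have hna : n * a m ≤ a (n * m) := by simpa using ha'.apply_mul_le hn m
  rw [div_le_div_iff₀ (by positivity) (by positivity)]
  calc a m * n = n * a m := mul_comm _ _
    _ ≤ a (n * m) := hna
    _ ≤ b (m * n) := mul_comm n m ▸ hab _
    _ ≤ m * b n := hb.apply_mul_le hm n
    _ = b n * m := mul_comm _ _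

theorem div_le_infRate (ha : ∀ m n, a m + a n ≤ a (m + n)) (hb : Subadditive b) (hab : a ≤ b)
    {n : ℕ} (hn : n ≠ 0) : a n / n ≤ infRate b :=
  le_ciInf fun k => by
    exact_mod_cast div_le_div_of_superadditive_of_subadditive ha hb hab hn k.succ_ne_zero

theorem infRate_le_div (ha : ∀ m n, a m + a n ≤ a (m + n)) (hb : Subadditive b) (hab : a ≤ b)
    {n : ℕ} (hn : n ≠ 0) : infRate b ≤ b n / n := by
  obtain ⟨k, rfl⟩ := Nat.exists_eq_succ_of_ne_zero hn
  refine (ciInf_le ⟨a 1 / 1, ?_⟩ k).trans_eq (by push_cast; rfl)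
  rintro _ ⟨j, rfl⟩
  exact_mod_cast div_le_div_of_superadditive_of_subadditive ha hb hab one_ne_zero j.succ_ne_zero

end InfRate

theorem continuousOn_of_dist_le_of_tendsto_zero {α β : Type*} [TopologicalSpace α]
    [PseudoMetricSpace β] {F : ℕ → α → β} {f : α → β} {s : Set α} {ε : ℕ → ℝ}
    (hF : ∀ k, ContinuousOn (F k) s) (hε : Tendsto ε atTop (𝓝 0))
    (hdist : ∀ k, ∀ x ∈ s, dist (f x) (F k x) ≤ ε k) : ContinuousOn f s :=
  TendstoUniformlyOn.continuousOn
    (Metric.tendstoUniformlyOn_iff.2 fun _ hδ =>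
      (hε.eventually (gt_mem_nhds hδ)).mono fun k hk x hx => (hdist k x hx).trans_lt hk)
    (Frequently.of_forall hF)

section Continuant

variable {c : ℝ} {a : ℕ → ℝ}

variable (c a) in
def continuant : ℕ → ℝ
  | 0 => 1
  | 1 => 1
  | j + 2 => (c + a (j + 2) + a (j + 1)) * continuant (j + 1) - a (j + 1) ^ 2 * continuant j

variable (c a) in
def IsContinuantRec (w : ℕ → ℝ) : Prop :=
  ∀ j, w (j + 2) = (c + a (j + 2) + a (j + 1)) * w (j + 1) - a (j + 1) ^ 2 * w j

@[simp] theorem continuant_zero : continuant c a 0 = 1 := rfl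

@[simp] theorem continuant_one : continuant c a 1 = 1 := rfl

theorem isContinuantRec_continuant : IsContinuantRec c a (continuant c a) := fun _ => rfl

namespace IsContinuantRec

variable {w w' : ℕ → ℝ}

theorem shift (hw : IsContinuantRec c a w) (n : ℕ) :
    IsContinuantRec c (fun j => a (n + j)) (fun j => w (n + j)) := fun j => hw (n + j)

theorem sub (hw : IsContinuantRec c a w) (hw' : IsContinuantRec c a w') :
    IsContinuantRec c a (fun j => w j - w' j) := fun j => by
  simp only [hw j, hw' j]; ring

theorem const_mul (hw : IsContinuantRec c a w) (x : ℝ) :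
    IsContinuantRec c a (fun j => x * w j) := fun j => by
  simp only [hw j]; ring

theorem nonneg_and_mul_le (hw : IsContinuantRec c a w) (hc : 0 ≤ c) (ha : ∀ j, 0 ≤ a j)
    (h0 : 0 ≤ w 0) (h1 : a 1 * w 0 ≤ w 1) : ∀ j, 0 ≤ w j ∧ a (j + 1) * w j ≤ w (j + 1)
  | 0 => ⟨h0, h1⟩
  | j + 1 => by
    obtain ⟨hwj, hstep⟩ := nonneg_and_mul_le hw hc ha h0 h1 j
    have hwj1 : 0 ≤ w (j + 1) := (mul_nonneg (ha _) hwj).trans hstep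
    refine ⟨hwj1, ?_⟩
    -- `w (j+2) - a (j+2) w (j+1) = c w (j+1) + a (j+1) (w (j+1) - a (j+1) w j)`
    rw [hw j]
    nlinarith [mul_nonneg hc hwj1, mul_nonneg (ha (j + 1)) (sub_nonneg.2 hstep)]

end IsContinuantRec

theorem continuant_congr {a' : ℕ → ℝ} :
    ∀ j, (∀ i, 1 ≤ i → i ≤ j → a i = a' i) → continuant c a j = continuant c a' j
  | 0, _ => rfl
  | 1, _ => rfl
  | j + 2, h => by
    simp only [continuant]
    rw [continuant_congr (j + 1) fun i h1 h2 => h i h1 (by omega),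
      continuant_congr j fun i h1 h2 => h i h1 (by omega), h (j + 2) (by omega) le_rfl,
      h (j + 1) (by omega) (by omega)]

theorem continuant_nonneg_and_mul_le (hc : 0 ≤ c) (ha : ∀ j, 0 ≤ a j) (hca : ∀ j, c + 2 * a j ≤ 1)
    (j : ℕ) : 0 ≤ continuant c a j ∧ a (j + 1) * continuant c a j ≤ continuant c a (j + 1) :=
  isContinuantRec_continuant.nonneg_and_mul_le hc ha zero_le_one
    (by simp only [continuant_zero, continuant_one]; linarith [hca 1, ha 1]) j

theorem add_mul_continuant_le (hc : 0 ≤ c) (ha : ∀ j, 0 ≤ a j) (hca : ∀ j, c + 2 * a j ≤ 1) :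
    ∀ j, (c + a (j + 1)) * continuant c a j ≤ continuant c a (j + 1)
  | 0 => by rw [zero_add, continuant_zero, continuant_one]; linarith [hca 1, ha 1]
  | j + 1 => by
    obtain ⟨-, hstep⟩ := continuant_nonneg_and_mul_le hc ha hca j
    rw [isContinuantRec_continuant j]
    nlinarith [mul_nonneg (ha (j + 1)) (sub_nonneg.2 hstep)]

theorem continuant_pos (hc : 0 < c) (ha : ∀ j, 0 ≤ a j) (hca : ∀ j, c + 2 * a j ≤ 1) :
    ∀ j, 0 < continuant c a j
  | 0 => one_pos
  | j + 1 => (mul_pos (by linarith [ha (j + 1)]) (continuant_pos hc ha hca j)).trans_le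
      (add_mul_continuant_le hc.le ha hca j)

theorem continuant_succ_le (hc : 0 ≤ c) (ha : ∀ j, 0 ≤ a j) (hca : ∀ j, c + 2 * a j ≤ 1) :
    ∀ j, continuant c a (j + 1) ≤ continuant c a j
  | 0 => le_rfl
  | j + 1 => by
    obtain ⟨hj, -⟩ := continuant_nonneg_and_mul_le hc ha hca j
    obtain ⟨hj1, -⟩ := continuant_nonneg_and_mul_le hc ha hca (j + 1)
    rw [isContinuantRec_continuant j]
    nlinarith [hca (j + 1), hca (j + 2), mul_nonneg (sq_nonneg (a (j + 1))) hj]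

theorem prod_le_continuant (hc : 0 ≤ c) (ha : ∀ j, 0 ≤ a j) (hca : ∀ j, c + 2 * a j ≤ 1) :
    ∀ n, ∏ i ∈ Icc 1 n, a i ≤ continuant c a n
  | 0 => by simp
  | n + 1 => by
    rw [prod_Icc_succ_top (by omega)]
    calc (∏ i ∈ Icc 1 n, a i) * a (n + 1) ≤ continuant c a n * a (n + 1) :=
          mul_le_mul_of_nonneg_right (prod_le_continuant hc ha hca n) (ha _)
      _ ≤ continuant c a (n + 1) := by
          rw [mul_comm]; exact (continuant_nonneg_and_mul_le hc ha hca n).2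

theorem continuant_add_le (hc : 0 ≤ c) (ha : ∀ j, 0 ≤ a j) (hca : ∀ j, c + 2 * a j ≤ 1)
    (n m : ℕ) :
    continuant c a (n + m) ≤ continuant c a n * continuant c (fun j => a (n + j)) m := by
  have hrec : IsContinuantRec c (fun j => a (n + j))
      (fun j => continuant c a n * continuant c (fun j => a (n + j)) j - continuant c a (n + j)) :=
    (isContinuantRec_continuant.const_mul _).sub (isContinuantRec_continuant.shift n)
  have h := hrec.nonneg_and_mul_le hc (fun _ => ha _) (by simp)
    (by simpa using continuant_succ_le hc ha hca n) m
  linarith [h.1]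

theorem mul_continuant_le_continuant_add (hc : 0 ≤ c) (ha : ∀ j, 0 ≤ a j)
    (hca : ∀ j, c + 2 * a j ≤ 1) (n m : ℕ) :
    c * (continuant c a n * continuant c (fun j => a (n + j)) m) ≤ continuant c a (n + m) := by
  have hrec : IsContinuantRec c (fun j => a (n + j)) (fun j =>
      continuant c a (n + j) - c * continuant c a n * continuant c (fun j => a (n + j)) j) :=
    (isContinuantRec_continuant.shift n).sub (isContinuantRec_continuant.const_mul _)
  have hn := (continuant_nonneg_and_mul_le hc ha hca n).1
  have hn1 := add_mul_continuant_le hc ha hca n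
  have h := hrec.nonneg_and_mul_le hc (fun _ => ha _)
    (by simp only [add_zero, continuant_zero, mul_one]; nlinarith [hca 0, ha 0])
    (by simp only [add_zero, continuant_zero, continuant_one, mul_one]
        nlinarith [mul_nonneg (mul_nonneg hc (ha (n + 1))) hn]) m
  linarith [h.1]

end Continuant

theorem Fin.prod_comp_append {α β : Type*} [CommMonoid β] {n m : ℕ} (f : α → β) (x : Fin n → α)
    (y : Fin m → α) : ∏ i, f (Fin.append x y i) = (∏ i, f (x i)) * ∏ i, f (y i) := by
  simp [Fin.prod_univ_add]

theorem summable_prod_comp_of_nonneg {ι : Type*} {f : ι → ℝ} (hf0 : ∀ i, 0 ≤ f i)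
    (hf : Summable f) : ∀ n, Summable fun r : Fin n → ι => ∏ i, f (r i)
  | 0 => Summable.of_finite
  | n + 1 => (Fin.consEquiv fun _ => ι).summable_iff.1 <| by
    simpa [Function.comp_def, Fin.prod_univ_succ] using
      hf.mul_of_nonneg (summable_prod_comp_of_nonneg hf0 hf n) (fun i => hf0 i)
        fun r => prod_nonneg fun i _ => hf0 (r i)

theorem summable_pow_pred_pnat {x : ℝ} (hx0 : 0 ≤ x) (hx1 : x < 1) :
    Summable fun k : ℕ+ => x ^ ((k : ℕ) - 1) :=
  summable_pnat_iff_summable_succ (f := fun k => x ^ (k - 1)) |>.2 <| by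
    simpa only [Nat.add_sub_cancel] using summable_geometric_of_lt_one hx0 hx1

section KilledContinuant

variable {M : ℝ}

def FMcoef (M : ℝ) (k : ℕ) : ℝ := Real.exp (-M) / (2 * k)

def killedContinuant (M : ℝ) (s : ℕ → ℕ) : ℕ → ℝ :=
  continuant (1 - Real.exp (-M)) (fun i => FMcoef M (s i))

theorem FMcoef_nonneg (M : ℝ) (k : ℕ) : 0 ≤ FMcoef M k :=
  div_nonneg (Real.exp_pos _).le (by positivity)

theorem one_sub_exp_neg_add_two_mul_FMcoef_le (M : ℝ) (k : ℕ) :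
    1 - Real.exp (-M) + 2 * FMcoef M k ≤ 1 := by
  rcases Nat.eq_zero_or_pos k with rfl | hk
  · simp [FMcoef, (Real.exp_pos _).le]
  · have hk : (1 : ℝ) ≤ k := by exact_mod_cast hk
    have : 2 * FMcoef M k ≤ Real.exp (-M) := by
      rw [FMcoef, mul_div_assoc']
      exact div_le_of_le_mul₀ (by positivity) (Real.exp_pos _).le (by nlinarith [Real.exp_pos (-M)])
    linarith

theorem one_sub_exp_neg_pos (hM : 0 < M) : 0 < 1 - Real.exp (-M) :=
  sub_pos.2 (Real.exp_lt_one_iff.2 (neg_neg_of_pos hM))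

theorem killedContinuant_pos (hM : 0 < M) (s : ℕ → ℕ) (j : ℕ) : 0 < killedContinuant M s j :=
  continuant_pos (one_sub_exp_neg_pos hM) (fun _ => FMcoef_nonneg M _)
    (fun _ => one_sub_exp_neg_add_two_mul_FMcoef_le M _) j

theorem FM_zero_left (M : ℝ) (r : ℕ) (u : ℝ) : FM M 0 r u = FMcoef M r := if_pos rfl

theorem FM_of_ne_zero {ℓ : ℕ} (hℓ : ℓ ≠ 0) (r : ℕ) (u : ℝ) :
    FM M ℓ r u = FMcoef M r / (1 - Real.exp (-M) + FMcoef M r + FMcoef M ℓ * (1 - u)) := by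
  rw [FM, if_neg hℓ, FMcoef, FMcoef, div_eq_mul_inv _ (_ + _)]
  congr 2
  ring

theorem FM_uSeq_pred (M : ℝ) (s : ℕ → ℕ) {i : ℕ} (hi : 1 ≤ i) :
    FM M (s (i - 1)) (s i) (uSeq M s (i - 1)) = uSeq M s i := by
  obtain ⟨j, rfl⟩ := Nat.exists_eq_add_of_le' hi
  rfl

theorem uSeq_succ_eq (hM : 0 < M) {s : ℕ → ℕ} (hs0 : s 0 = 0) :
    ∀ j, (∀ i, 1 ≤ i → i ≤ j → s i ≠ 0) →
      uSeq M s (j + 1) =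
        FMcoef M (s (j + 1)) * killedContinuant M s j / killedContinuant M s (j + 1)
  | 0, _ => by simp [uSeq, hs0, FM_zero_left, killedContinuant]
  | j + 1, hs => by
    have ih := uSeq_succ_eq hM hs0 j fun i h1 h2 => hs i h1 (by omega)
    have hD := killedContinuant_pos hM s
    have hrec : killedContinuant M s (j + 2) =
        (1 - Real.exp (-M) + FMcoef M (s (j + 2)) + FMcoef M (s (j + 1))) *
          killedContinuant M s (j + 1) - FMcoef M (s (j + 1)) ^ 2 * killedContinuant M s j :=
      isContinuantRec_continuant j
    have hden : 1 - Real.exp (-M) + FMcoef M (s (j + 2)) + FMcoef M (s (j + 1)) *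
        (1 - uSeq M s (j + 1)) = killedContinuant M s (j + 2) / killedContinuant M s (j + 1) := by
      rw [ih, hrec]
      field_simp [(hD (j + 1)).ne']
      ring
    rw [uSeq, FM_of_ne_zero (hs _ (by omega) le_rfl), hden]
    field_simp [(hD (j + 1)).ne', (hD (j + 2)).ne']

theorem prod_uSeq_eq (hM : 0 < M) {s : ℕ → ℕ} (hs0 : s 0 = 0) :
    ∀ n, (∀ i, 1 ≤ i → i ≤ n → s i ≠ 0) →
      ∏ i ∈ Icc 1 n, uSeq M s i = (∏ i ∈ Icc 1 n, FMcoef M (s i)) / killedContinuant M s n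
  | 0, _ => by simp [killedContinuant]
  | n + 1, hs => by
    rw [prod_Icc_succ_top (by omega), prod_Icc_succ_top (by omega),
      prod_uSeq_eq hM hs0 n fun i h1 h2 => hs i h1 (by omega),
      uSeq_succ_eq hM hs0 n fun i h1 h2 => hs i h1 (by omega)]
    field_simp [(killedContinuant_pos hM s n).ne', (killedContinuant_pos hM s (n + 1)).ne']

end KilledContinuant

section Configurations

variable {n m : ℕ}

theorem ext_zero (r : Fin n → ℕ+) : ext n r 0 = 0 := dif_neg (by omega)

theorem ext_of_mem (r : Fin n → ℕ+) {i : ℕ} (h1 : 1 ≤ i) (h2 : i ≤ n) :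
    ext n r i = r ⟨i - 1, by omega⟩ := dif_pos ⟨h1, h2⟩

theorem ext_ne_zero (r : Fin n → ℕ+) {i : ℕ} (h1 : 1 ≤ i) (h2 : i ≤ n) : ext n r i ≠ 0 := by
  rw [ext_of_mem r h1 h2]
  exact PNat.ne_zero _

theorem prod_Icc_ext {β : Type*} [CommMonoid β] (f : ℕ → β) (r : Fin n → ℕ+) :
    ∏ i ∈ Icc 1 n, f (ext n r i) = ∏ i, f (r i) := by
  rw [← Finset.Ico_add_one_right_eq_Icc, prod_Ico_eq_prod_range, Nat.add_sub_cancel,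
    ← Fin.prod_univ_eq_prod_range]
  refine prod_congr rfl fun i _ => ?_
  rw [ext_of_mem r (by omega) (by omega)]
  congr 3
  ext
  simp [add_comm]

theorem ext_append_left (x : Fin n → ℕ+) (y : Fin m → ℕ+) {i : ℕ} (h : i ≤ n) :
    ext (n + m) (Fin.append x y) i = ext n x i := by
  rcases Nat.eq_zero_or_pos i with rfl | h1
  · rw [ext_zero, ext_zero]
  · rw [ext_of_mem _ h1 (by omega), ext_of_mem x h1 h]
    exact congrArg _ (Fin.append_left x y ⟨i - 1, by omega⟩)

theorem ext_append_right (x : Fin n → ℕ+) (y : Fin m → ℕ+) {j : ℕ} (h1 : 1 ≤ j) (h2 : j ≤ m) :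
    ext (n + m) (Fin.append x y) (n + j) = ext m y j := by
  rw [ext_of_mem _ (by omega) (by omega), ext_of_mem y h1 h2]
  have e : (⟨n + j - 1, by omega⟩ : Fin (n + m)) = Fin.natAdd n ⟨j - 1, by omega⟩ :=
    Fin.ext (by simp; omega)
  rw [e, Fin.append_right]

end Configurations

section SurvivalFactor

variable {M : ℝ} {n m : ℕ}

def survival (M : ℝ) (n : ℕ) (r : Fin n → ℕ+) : ℝ := ∏ i ∈ Icc 1 n, uSeq M (ext n r) i

def geomWeight (q : ℝ) (k : ℕ+) : ℝ := q * (1 - q) ^ ((k : ℕ) - 1)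

def UTerm (M q : ℝ) (n : ℕ) (r : Fin n → ℕ+) : ℝ := (∏ i, geomWeight q (r i)) * survival M n r

theorem U_eq_tsum (M q : ℝ) (n : ℕ) : U M q n = ∑' r, UTerm M q n r := by
  refine tsum_congr fun r => ?_
  simp only [UTerm, survival, geomWeight]
  rw [← prod_Icc_ext (fun k => q * (1 - q) ^ (k - 1)),
    ← prod_mul_distrib]
  exact prod_congr rfl fun i hi => by rw [FM_uSeq_pred M _ (mem_Icc.1 hi).1]

theorem survival_eq_div (hM : 0 < M) (r : Fin n → ℕ+) :
    survival M n r = (∏ i ∈ Icc 1 n, FMcoef M (ext n r i)) / killedContinuant M (ext n r) n :=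
  prod_uSeq_eq hM (ext_zero r) n fun _ => ext_ne_zero r

theorem survival_eq_prod_div (hM : 0 < M) (r : Fin n → ℕ+) :
    survival M n r = (∏ i, FMcoef M (r i)) / killedContinuant M (ext n r) n := by
  rw [survival_eq_div hM, prod_Icc_ext (FMcoef M)]

theorem survival_pos (hM : 0 < M) (r : Fin n → ℕ+) : 0 < survival M n r := by
  rw [survival_eq_prod_div hM]
  refine div_pos (prod_pos fun i _ => div_pos (Real.exp_pos _) ?_) (killedContinuant_pos hM _ n)
  exact mul_pos two_pos (by exact_mod_cast (r i).pos)

theorem survival_le_one (hM : 0 < M) (r : Fin n → ℕ+) : survival M n r ≤ 1 := by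
  rw [survival_eq_div hM]
  exact div_le_one_of_le₀ (prod_le_continuant (one_sub_exp_neg_pos hM).le
    (fun _ => FMcoef_nonneg M _) (fun _ => one_sub_exp_neg_add_two_mul_FMcoef_le M _) n)
    (killedContinuant_pos hM _ n).le

theorem killedContinuant_append_left (x : Fin n → ℕ+) (y : Fin m → ℕ+) :
    killedContinuant M (ext (n + m) (Fin.append x y)) n = killedContinuant M (ext n x) n :=
  continuant_congr n fun _ _ hi => by simp only [ext_append_left x y hi]

theorem continuant_append_right (x : Fin n → ℕ+) (y : Fin m → ℕ+) :
    continuant (1 - Real.exp (-M)) (fun j => FMcoef M (ext (n + m) (Fin.append x y) (n + j))) m =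
      killedContinuant M (ext m y) m :=
  continuant_congr m fun _ h1 h2 => by simp only [ext_append_right x y h1 h2]

theorem killedContinuant_append_le (hM : 0 < M) (x : Fin n → ℕ+) (y : Fin m → ℕ+) :
    killedContinuant M (ext (n + m) (Fin.append x y)) (n + m) ≤
      killedContinuant M (ext n x) n * killedContinuant M (ext m y) m := by
  rw [← killedContinuant_append_left x y, ← continuant_append_right x y]
  exact continuant_add_le (one_sub_exp_neg_pos hM).le (fun _ => FMcoef_nonneg M _)
    (fun _ => one_sub_exp_neg_add_two_mul_FMcoef_le M _) n m

theorem mul_killedContinuant_le_append (hM : 0 < M) (x : Fin n → ℕ+) (y : Fin m → ℕ+) :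
    (1 - Real.exp (-M)) * (killedContinuant M (ext n x) n * killedContinuant M (ext m y) m) ≤
      killedContinuant M (ext (n + m) (Fin.append x y)) (n + m) := by
  rw [← killedContinuant_append_left x y, ← continuant_append_right x y]
  exact mul_continuant_le_continuant_add (one_sub_exp_neg_pos hM).le (fun _ => FMcoef_nonneg M _)
    (fun _ => one_sub_exp_neg_add_two_mul_FMcoef_le M _) n m

theorem survival_mul_le_survival_append (hM : 0 < M) (x : Fin n → ℕ+) (y : Fin m → ℕ+) :
    survival M n x * survival M m y ≤ survival M (n + m) (Fin.append x y) := by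
  rw [survival_eq_prod_div hM, survival_eq_prod_div hM, survival_eq_prod_div hM,
    Fin.prod_comp_append (fun k : ℕ+ => FMcoef M k), div_mul_div_comm]
  exact div_le_div_of_nonneg_left
    (mul_nonneg (prod_nonneg fun _ _ => FMcoef_nonneg M _)
      (prod_nonneg fun _ _ => FMcoef_nonneg M _))
    (killedContinuant_pos hM _ _) (killedContinuant_append_le hM x y)

theorem survival_append_le (hM : 0 < M) (x : Fin n → ℕ+) (y : Fin m → ℕ+) :
    survival M (n + m) (Fin.append x y) ≤
      survival M n x * survival M m y / (1 - Real.exp (-M)) := by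
  rw [survival_eq_prod_div hM, survival_eq_prod_div hM, survival_eq_prod_div hM,
    Fin.prod_comp_append (fun k : ℕ+ => FMcoef M k), div_mul_div_comm, div_div, mul_comm _ (1 - _)]
  exact div_le_div_of_nonneg_left
    (mul_nonneg (prod_nonneg fun _ _ => FMcoef_nonneg M _)
      (prod_nonneg fun _ _ => FMcoef_nonneg M _))
    (mul_pos (one_sub_exp_neg_pos hM) (mul_pos (killedContinuant_pos hM _ _)
      (killedContinuant_pos hM _ _))) (mul_killedContinuant_le_append hM x y)

end SurvivalFactor

section U

variable {M q : ℝ} {n m : ℕ}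

theorem geomWeight_pos (hq : q ∈ Set.Ioo 0 1) (k : ℕ+) : 0 < geomWeight q k :=
  mul_pos hq.1 (pow_pos (sub_pos.2 hq.2) _)

theorem geomWeight_le {δ : ℝ} (hδq : δ ≤ q) (hq : q ≤ 1) (k : ℕ+) :
    geomWeight q k ≤ (1 - δ) ^ ((k : ℕ) - 1) := by
  have h1q : 0 ≤ 1 - q := sub_nonneg.2 hq
  calc geomWeight q k = q * (1 - q) ^ ((k : ℕ) - 1) := rfl
    _ ≤ 1 * (1 - δ) ^ ((k : ℕ) - 1) :=
      mul_le_mul hq (pow_le_pow_left₀ h1q (by linarith) _) (pow_nonneg h1q _) zero_le_one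
    _ = (1 - δ) ^ ((k : ℕ) - 1) := one_mul _

theorem UTerm_pos (hM : 0 < M) (hq : q ∈ Set.Ioo 0 1) (r : Fin n → ℕ+) : 0 < UTerm M q n r :=
  mul_pos (prod_pos fun _ _ => geomWeight_pos hq _) (survival_pos hM r)

theorem UTerm_le_prod (hM : 0 < M) (hq : q ∈ Set.Ioo 0 1) (r : Fin n → ℕ+) :
    UTerm M q n r ≤ ∏ i, geomWeight q (r i) :=
  mul_le_of_le_one_right (prod_nonneg fun _ _ => (geomWeight_pos hq _).le) (survival_le_one hM r)

theorem summable_UTerm (hM : 0 < M) (hq : q ∈ Set.Ioo 0 1) (n : ℕ) : Summable (UTerm M q n) :=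
  .of_nonneg_of_le (fun r => (UTerm_pos hM hq r).le) (UTerm_le_prod hM hq)
    (summable_prod_comp_of_nonneg (fun k => (geomWeight_pos hq k).le)
      ((summable_pow_pred_pnat (sub_nonneg.2 hq.2.le) (by linarith [hq.1])).mul_left q) n)

theorem U_pos (hM : 0 < M) (hq : q ∈ Set.Ioo 0 1) (n : ℕ) : 0 < U M q n := by
  rw [U_eq_tsum]
  exact (summable_UTerm hM hq n).tsum_pos (fun r => (UTerm_pos hM hq r).le) (fun _ => 1)
    (UTerm_pos hM hq _)

theorem UTerm_mul_le_UTerm_append (hM : 0 < M) (hq : q ∈ Set.Ioo 0 1) (x : Fin n → ℕ+)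
    (y : Fin m → ℕ+) : UTerm M q n x * UTerm M q m y ≤ UTerm M q (n + m) (Fin.append x y) := by
  rw [UTerm, UTerm, UTerm, Fin.prod_comp_append (geomWeight q), mul_mul_mul_comm]
  exact mul_le_mul_of_nonneg_left (survival_mul_le_survival_append hM x y)
    (mul_nonneg (prod_nonneg fun _ _ => (geomWeight_pos hq _).le)
      (prod_nonneg fun _ _ => (geomWeight_pos hq _).le))

theorem UTerm_append_le (hM : 0 < M) (hq : q ∈ Set.Ioo 0 1) (x : Fin n → ℕ+) (y : Fin m → ℕ+) :
    UTerm M q (n + m) (Fin.append x y) ≤ UTerm M q n x * UTerm M q m y / (1 - Real.exp (-M)) := by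
  rw [UTerm, UTerm, UTerm, Fin.prod_comp_append (geomWeight q), mul_mul_mul_comm, mul_div_assoc]
  exact mul_le_mul_of_nonneg_left (survival_append_le hM x y)
    (mul_nonneg (prod_nonneg fun _ _ => (geomWeight_pos hq _).le)
      (prod_nonneg fun _ _ => (geomWeight_pos hq _).le))

theorem U_mul_eq_tsum (hM : 0 < M) (hq : q ∈ Set.Ioo 0 1) (n m : ℕ) :
    U M q n * U M q m = ∑' p : (Fin n → ℕ+) × (Fin m → ℕ+), UTerm M q n p.1 * UTerm M q m p.2 := by
  rw [U_eq_tsum, U_eq_tsum]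
  exact (summable_UTerm hM hq n).tsum_mul_tsum (summable_UTerm hM hq m)
    ((summable_UTerm hM hq n).mul_of_nonneg (summable_UTerm hM hq m)
      (fun r => (UTerm_pos hM hq r).le) fun r => (UTerm_pos hM hq r).le)

theorem U_add_eq_tsum (M q : ℝ) (n m : ℕ) :
    U M q (n + m) = ∑' p : (Fin n → ℕ+) × (Fin m → ℕ+), UTerm M q (n + m) (Fin.append p.1 p.2) :=
  (U_eq_tsum M q _).trans ((Fin.appendEquiv n m).tsum_eq (UTerm M q (n + m))).symm

theorem summable_UTerm_append (hM : 0 < M) (hq : q ∈ Set.Ioo 0 1) (n m : ℕ) :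
    Summable fun p : (Fin n → ℕ+) × (Fin m → ℕ+) => UTerm M q (n + m) (Fin.append p.1 p.2) :=
  (Fin.appendEquiv n m).summable_iff (f := UTerm M q (n + m)) |>.2 (summable_UTerm hM hq _)

theorem U_mul_le_U_add (hM : 0 < M) (hq : q ∈ Set.Ioo 0 1) (n m : ℕ) :
    U M q n * U M q m ≤ U M q (n + m) := by
  rw [U_mul_eq_tsum hM hq, U_add_eq_tsum]
  exact Summable.tsum_le_tsum (fun p => UTerm_mul_le_UTerm_append hM hq p.1 p.2)
    ((summable_UTerm hM hq n).mul_of_nonneg (summable_UTerm hM hq m)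
      (fun r => (UTerm_pos hM hq r).le) fun r => (UTerm_pos hM hq r).le)
    (summable_UTerm_append hM hq n m)

theorem U_add_le (hM : 0 < M) (hq : q ∈ Set.Ioo 0 1) (n m : ℕ) :
    U M q (n + m) ≤ U M q n * U M q m / (1 - Real.exp (-M)) := by
  rw [U_mul_eq_tsum hM hq, U_add_eq_tsum, ← tsum_div_const]
  exact Summable.tsum_le_tsum (fun p => UTerm_append_le hM hq p.1 p.2)
    (summable_UTerm_append hM hq n m)
    (((summable_UTerm hM hq n).mul_of_nonneg (summable_UTerm hM hq m)
      (fun r => (UTerm_pos hM hq r).le) fun r => (UTerm_pos hM hq r).le).div_const _)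

theorem survival_one (M : ℝ) (r : Fin 1 → ℕ+) : survival M 1 r = FMcoef M (r 0) := by
  simp [survival, uSeq, ext_zero, FM_zero_left, ext_of_mem r le_rfl le_rfl]

theorem U_one (hq : q ∈ Set.Ioo 0 1) :
    U M q 1 = q * Real.log (1 / q) / (2 * Real.exp M * (1 - q)) := by
  have h1q : 0 < 1 - q := sub_pos.2 hq.2
  have hlog := (Real.hasSum_pow_div_log_of_abs_lt_one (x := 1 - q)
    (abs_lt.2 ⟨by linarith [hq.2], by linarith [hq.1]⟩)).mul_left (q / (2 * Real.exp M * (1 - q)))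
  set f : ℕ → ℝ := fun j => q * (1 - q) ^ (j - 1) * (Real.exp (-M) / (2 * j))
  have hterm : ∀ k : ℕ+, UTerm M q 1 ((Equiv.funUnique (Fin 1) ℕ+).symm k) = f k := fun k => by
    simp [f, UTerm, survival_one, geomWeight, FMcoef]
  have hrhs : q * Real.log (1 / q) / (2 * Real.exp M * (1 - q)) =
      q / (2 * Real.exp M * (1 - q)) * -Real.log (1 - (1 - q)) := by
    rw [sub_sub_cancel, one_div, Real.log_inv]
    ring
  rw [U_eq_tsum, ← (Equiv.funUnique (Fin 1) ℕ+).symm.tsum_eq, tsum_congr hterm,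
    tsum_pnat_eq_tsum_succ (f := f), hrhs, ← hlog.tsum_eq]
  refine tsum_congr fun j => ?_
  simp only [f, Nat.add_sub_cancel, Real.exp_neg]
  field_simp
  push_cast
  ring

theorem U_continuousOn (hM : 0 < M) (n : ℕ) :
    ContinuousOn (fun q => U M q n) (Set.Ioo 0 1) := by
  intro q₀ hq₀
  have hδ : 0 < q₀ / 2 := by linarith [hq₀.1]
  have hcont : ContinuousOn (fun q => U M q n) (Set.Ioo (q₀ / 2) 1) := by
    simp_rw [U_eq_tsum]
    refine continuousOn_tsum (fun r => Continuous.continuousOn ?_)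
      (summable_prod_comp_of_nonneg (fun k => pow_nonneg (by linarith [hq₀.2]) _)
        (summable_pow_pred_pnat (x := 1 - q₀ / 2) (by linarith [hq₀.2]) (by linarith)) n)
      fun r q hq => ?_
    · simp only [UTerm, geomWeight]
      fun_prop
    · have hq' : q ∈ Set.Ioo 0 1 := ⟨hδ.trans hq.1, hq.2⟩
      rw [Real.norm_of_nonneg (UTerm_pos hM hq' r).le]
      exact (UTerm_le_prod hM hq' r).trans (prod_le_prod (fun _ _ => (geomWeight_pos hq' _).le)
        fun _ _ => geomWeight_le hq.1.le hq.2.le _)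
  exact (hcont.continuousAt (Ioo_mem_nhds (by linarith [hq₀.1]) hq₀.2)).continuousWithinAt

end U

section GrowthRate

variable {M q : ℝ}

def growthRate (M q : ℝ) : ℝ :=
  Real.exp (infRate fun n => Real.log (U M q n / (1 - Real.exp (-M))))

theorem log_U_superadditive (hM : 0 < M) (hq : q ∈ Set.Ioo 0 1) (m n : ℕ) :
    Real.log (U M q m) + Real.log (U M q n) ≤ Real.log (U M q (m + n)) := by
  rw [← Real.log_mul (U_pos hM hq m).ne' (U_pos hM hq n).ne']
  exact Real.log_le_log (mul_pos (U_pos hM hq m) (U_pos hM hq n)) (U_mul_le_U_add hM hq m n)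

theorem subadditive_log_U_div (hM : 0 < M) (hq : q ∈ Set.Ioo 0 1) :
    Subadditive fun n => Real.log (U M q n / (1 - Real.exp (-M))) := fun m n => by
  have hc := one_sub_exp_neg_pos hM
  have hU := U_pos hM hq
  rw [← Real.log_mul (div_pos (hU m) hc).ne' (div_pos (hU n) hc).ne']
  refine Real.log_le_log (div_pos (hU _) hc) ?_
  calc U M q (m + n) / (1 - Real.exp (-M))
      ≤ U M q m * U M q n / (1 - Real.exp (-M)) / (1 - Real.exp (-M)) :=
        div_le_div_of_nonneg_right (U_add_le hM hq m n) hc.le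
    _ = U M q m / (1 - Real.exp (-M)) * (U M q n / (1 - Real.exp (-M))) := by ring

theorem log_U_le_log_U_div (hM : 0 < M) (hq : q ∈ Set.Ioo 0 1) (n : ℕ) :
    Real.log (U M q n) ≤ Real.log (U M q n / (1 - Real.exp (-M))) :=
  Real.log_le_log (U_pos hM hq n) <| le_div_self (U_pos hM hq n).le (one_sub_exp_neg_pos hM)
    (by linarith [Real.exp_pos (-M)])

theorem U_le_growthRate_pow (hM : 0 < M) (hq : q ∈ Set.Ioo 0 1) {n : ℕ} (hn : n ≠ 0) :
    U M q n ≤ growthRate M q ^ n := by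
  have h := div_le_infRate (log_U_superadditive hM hq) (subadditive_log_U_div hM hq)
    (log_U_le_log_U_div hM hq) hn
  rw [div_le_iff₀ (by positivity), mul_comm] at h
  rw [growthRate, ← Real.exp_nat_mul, ← Real.exp_log (U_pos hM hq n)]
  exact Real.exp_le_exp.2 h

theorem growthRate_pow_le (hM : 0 < M) (hq : q ∈ Set.Ioo 0 1) {n : ℕ} (hn : n ≠ 0) :
    growthRate M q ^ n ≤ U M q n / (1 - Real.exp (-M)) := by
  have h := infRate_le_div (log_U_superadditive hM hq) (subadditive_log_U_div hM hq)
    (log_U_le_log_U_div hM hq) hn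
  rw [le_div_iff₀ (by positivity), mul_comm] at h
  rw [growthRate, ← Real.exp_nat_mul,
    ← Real.exp_log (div_pos (U_pos hM hq n) (one_sub_exp_neg_pos hM))]
  exact Real.exp_le_exp.2 h

theorem growthRate_continuousOn (hM : 0 < M) : ContinuousOn (growthRate M) (Set.Ioo 0 1) := by
  have hc := one_sub_exp_neg_pos hM
  have hε : Tendsto (fun k : ℕ => -Real.log (1 - Real.exp (-M)) * (1 / ((k : ℝ) + 1))) atTop
      (𝓝 0) := by
    simpa using tendsto_one_div_add_atTop_nhds_zero_nat.const_mul (-Real.log (1 - Real.exp (-M)))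
  refine Real.continuous_exp.comp_continuousOn <| continuousOn_of_dist_le_of_tendsto_zero
    (F := fun k q => Real.log (U M q (k + 1) / (1 - Real.exp (-M))) / (k + 1))
    (ε := fun k => -Real.log (1 - Real.exp (-M)) * (1 / (k + 1)))
    (fun k => (((U_continuousOn hM (k + 1)).div_const _).log
      fun q hq => (div_pos (U_pos hM hq _) hc).ne').div_const _)
    hε fun k q hq => ?_
  have hupper := infRate_le_div (log_U_superadditive hM hq) (subadditive_log_U_div hM hq)
    (log_U_le_log_U_div hM hq) k.succ_ne_zero
  have hlower := div_le_infRate (log_U_superadditive hM hq) (subadditive_log_U_div hM hq)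
    (log_U_le_log_U_div hM hq) k.succ_ne_zero
  push_cast at hupper hlower
  have hgap : Real.log (U M q (k + 1) / (1 - Real.exp (-M))) / (k + 1) -
      Real.log (U M q (k + 1)) / (k + 1) = -Real.log (1 - Real.exp (-M)) * (1 / (k + 1)) := by
    rw [Real.log_div (U_pos hM hq _).ne' hc.ne']
    ring
  rw [Real.dist_eq, abs_sub_comm, abs_of_nonneg (sub_nonneg.2 hupper)]
  linarith

end GrowthRate

/-- Lemma 3.4. There is a continuous `μ : (0,1) → ℝ` with
`q log(1/q)/(2e^M(1−q)) ≤ μ(q) ≤ q log(1/q)/(2(e^M−1)(1−q))` and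
`(1−e^{−M}) μ(q)^n ≤ U_n(q) ≤ μ(q)^n` for all `n`. -/
theorem U_exponential_rate (M : ℝ) (hM : 0 < M) :
    ∃ μ : ℝ → ℝ, ContinuousOn μ (Set.Ioo 0 1) ∧
      ∀ q ∈ Set.Ioo (0 : ℝ) 1,
        (q * Real.log (1 / q) / (2 * Real.exp M * (1 - q)) ≤ μ q ∧
          μ q ≤ q * Real.log (1 / q) / (2 * (Real.exp M - 1) * (1 - q))) ∧
        ∀ n : ℕ, 1 ≤ n →
          (1 - Real.exp (-M)) * μ q ^ n ≤ U M q n ∧ U M q n ≤ μ q ^ n := by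
  refine ⟨growthRate M, growthRate_continuousOn hM, fun q hq => ⟨⟨?_, ?_⟩, fun n hn => ⟨?_, ?_⟩⟩⟩
  · simpa [U_one hq] using U_le_growthRate_pow hM hq one_ne_zero
  · have hexp : Real.exp M * (1 - Real.exp (-M)) = Real.exp M - 1 := by
      rw [mul_sub, ← Real.exp_add, add_neg_cancel, Real.exp_zero, mul_one]
    have h := growthRate_pow_le hM hq one_ne_zero
    rwa [pow_one, U_one hq, div_div, mul_right_comm, mul_assoc 2, hexp] at h
  · have h := growthRate_pow_le hM hq (n := n) (by omega)
    rwa [le_div_iff₀ (one_sub_exp_neg_pos hM), mul_comm] at h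
  · exact U_le_growthRate_pow hM hq (by omega)

end
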